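/- arXiv:math-ph/0701024 — 4 statements merged into one kernel-verified Lean document; each statement's English description precedes it below -/
import Mathlib

section
/- With the matrices 𝒜ⁱ of the isentropic fluid system as above (a > 0, u ∈ ℝ³, κ ≠ 0), if e ∈ ℝ³ is a unit vector and ε = ±1, then the matrix (εa + u·e) I₄ + Σᵢ (−eᵢ) 𝒜ⁱ has nontrivial kernel; likewise, for any vectors e, m ∈ ℝ³, the matrix [u,e,m] I₄ + Σᵢ (−(e×m)ᵢ) 𝒜ⁱ has nontrivial kernel, where [u,e,m] = det(u,e,m). -/
/-!
Acting on a state `(p, w) ∈ ℝ × ℝ³`, the pencil `c I₄ + Σᵢ ξᵢ 𝒜ⁱ` gives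
`((c + ξ·u) p + κ⁻¹ a (ξ·w), κ a p ξ + (c + ξ·u) w)`.
For the potential wave vector `c + ξ·u = ε a` and `ξ = -e` is a unit vector, so
`(ε, κ e)` is annihilated since `ε² = |e|² = 1`. For the rotational wave vector
`c + ξ·u = [u,e,m] - (e×m)·u = 0`, so any `(0, w)` with `w ⊥ e×m` is annihilated;
take `w = e`.
-/

/-- The coefficient matrices 𝒜ⁱ of the isentropic fluid dynamics equations,
with index `Sum.inl 0` playing the role of the index `0` (the `a`-row)
and `Sum.inr j` the roles of the indices `j = 1,2,3`. -/
noncomputable def fluidMatrix (κ a : ℝ) (u : Fin 3 → ℝ) (i : Fin 3) :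
    Matrix (Fin 1 ⊕ Fin 3) (Fin 1 ⊕ Fin 3) ℝ :=
  Matrix.fromBlocks
    (Matrix.of fun _ _ => u i)
    (Matrix.of fun _ j => if i = j then κ⁻¹ * a else 0)
    (Matrix.of fun j _ => if i = j then κ * a else 0)
    (Matrix.of fun j k => if j = k then u i else 0)

open Matrix

section FluidPencil

variable {κ a : ℝ} {u : Fin 3 → ℝ}

theorem sum_smul_fluidMatrix (ξ : Fin 3 → ℝ) :
    ∑ i, ξ i • fluidMatrix κ a u i =
      fromBlocks (of fun _ _ => ξ ⬝ᵥ u) (of fun _ j => κ⁻¹ * a * ξ j)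
        (of fun j _ => κ * a * ξ j) ((ξ ⬝ᵥ u) • 1) := by
  ext (i | i) (j | j) <;>
    simp [fluidMatrix, Matrix.sum_apply, dotProduct, one_apply, mul_comm, mul_left_comm]

theorem fluidPencil_mulVec (c : ℝ) (ξ : Fin 3 → ℝ) (p : ℝ) (w : Fin 3 → ℝ) :
    (c • (1 : Matrix (Fin 1 ⊕ Fin 3) (Fin 1 ⊕ Fin 3) ℝ) + ∑ i, ξ i • fluidMatrix κ a u i) *ᵥ
        Sum.elim (fun _ => p) w =
      Sum.elim (fun _ => (c + ξ ⬝ᵥ u) * p + κ⁻¹ * a * (ξ ⬝ᵥ w))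
        (fun j => κ * a * ξ j * p + (c + ξ ⬝ᵥ u) * w j) := by
  rw [sum_smul_fluidMatrix, ← fromBlocks_one, fromBlocks_smul, fromBlocks_add,
    fromBlocks_mulVec]
  simp only [add_mulVec, smul_mulVec, one_mulVec]
  congr 1 <;> ext j <;> simp [mulVec, dotProduct, Finset.mul_sum, mul_assoc, add_mul]

theorem fluidPencil_mulVec_potential (hκ : κ ≠ 0) {c ε : ℝ} {ξ : Fin 3 → ℝ}
    (hc : c + ξ ⬝ᵥ u = ε * a) (hε : ε * ε = 1) (hξ : ξ ⬝ᵥ ξ = 1) :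
    (c • (1 : Matrix (Fin 1 ⊕ Fin 3) (Fin 1 ⊕ Fin 3) ℝ) + ∑ i, ξ i • fluidMatrix κ a u i) *ᵥ
        Sum.elim (fun _ => ε) (-κ • ξ) = 0 := by
  rw [fluidPencil_mulVec, hc, dotProduct_smul, hξ]
  ext (i | j)
  · simp only [Sum.elim_inl, Pi.zero_apply, smul_eq_mul]
    field_simp
    linear_combination a * hε
  · simp only [Sum.elim_inr, Pi.smul_apply, Pi.zero_apply, smul_eq_mul]
    ring

theorem fluidPencil_mulVec_rotational {c : ℝ} {ξ w : Fin 3 → ℝ}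
    (hc : c + ξ ⬝ᵥ u = 0) (hw : ξ ⬝ᵥ w = 0) :
    (c • (1 : Matrix (Fin 1 ⊕ Fin 3) (Fin 1 ⊕ Fin 3) ℝ) + ∑ i, ξ i • fluidMatrix κ a u i) *ᵥ
        Sum.elim (fun _ => 0) w = 0 := by
  rw [fluidPencil_mulVec, hc, hw]
  ext (i | j) <;> simp

end FluidPencil

theorem wave_vectors_kernel_general (κ a : ℝ) (hκ : κ ≠ 0) (u : Fin 3 → ℝ)
    (e m : Fin 3 → ℝ) (he : ∑ i, e i ^ 2 = 1) (ε : ℝ) (hε : ε = 1 ∨ ε = -1) :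
    (∃ v : Fin 1 ⊕ Fin 3 → ℝ, v ≠ 0 ∧
      ((ε * a + ∑ i, u i * e i) • (1 : Matrix (Fin 1 ⊕ Fin 3) (Fin 1 ⊕ Fin 3) ℝ)
        + ∑ i, (-(e i)) • fluidMatrix κ a u i).mulVec v = 0) ∧
    (∃ w : Fin 1 ⊕ Fin 3 → ℝ, w ≠ 0 ∧
      ((Matrix.det (Matrix.of ![u, e, m])) •
          (1 : Matrix (Fin 1 ⊕ Fin 3) (Fin 1 ⊕ Fin 3) ℝ)
        + ∑ i, (-(crossProduct e m i)) • fluidMatrix κ a u i).mulVec w = 0) := by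
  have he' : e ⬝ᵥ e = 1 := by simpa [dotProduct, sq] using he
  have hε2 : ε * ε = 1 := by rcases hε with rfl | rfl <;> norm_num
  have he0 : e ≠ 0 := by rintro rfl; simp at he'
  refine ⟨⟨_, ?_, fluidPencil_mulVec_potential hκ (ξ := -e) ?_ hε2 (by simpa using he')⟩,
    ⟨_, ?_, fluidPencil_mulVec_rotational (ξ := -(e ⨯₃ m)) (w := e) ?_
      (by simp [dotProduct_comm])⟩⟩
  · intro h
    have := congrFun h (Sum.inl 0)
    rcases hε with rfl | rfl <;> simp at this
  · simp [dotProduct, mul_comm]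
  · intro h
    exact he0 (funext fun j => congrFun h (Sum.inr j))
  · rw [show (of ![u, e, m]).det = u ⬝ᵥ e ⨯₃ m from (triple_product_eq_det u e m).symm,
      neg_dotProduct, dotProduct_comm u, add_neg_cancel]

theorem wave_vectors_kernel (κ a : ℝ) (hκ : κ ≠ 0) (ha : 0 < a) (u : Fin 3 → ℝ)
    (e m : Fin 3 → ℝ) (he : ∑ i, e i ^ 2 = 1) (ε : ℝ) (hε : ε = 1 ∨ ε = -1) :
    (∃ v : Fin 1 ⊕ Fin 3 → ℝ, v ≠ 0 ∧
      ((ε * a + ∑ i, u i * e i) • (1 : Matrix (Fin 1 ⊕ Fin 3) (Fin 1 ⊕ Fin 3) ℝ)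
        + ∑ i, (-(e i)) • fluidMatrix κ a u i).mulVec v = 0) ∧
    (∃ w : Fin 1 ⊕ Fin 3 → ℝ, w ≠ 0 ∧
      ((Matrix.det (Matrix.of ![u, e, m])) •
          (1 : Matrix (Fin 1 ⊕ Fin 3) (Fin 1 ⊕ Fin 3) ℝ)
        + ∑ i, (-(crossProduct e m i)) • fluidMatrix κ a u i).mulVec w = 0) :=
  wave_vectors_kernel_general κ a hκ u e m he ε hε
end

section
/- Fix A₁ ∈ ℝ, κ > 0 and a unit vector e ∈ ℝ³. On the domain {(t,x) : A₁(1+κ)t ≠ 1}, define a(t,x) = A₁ (e·x) / (A₁(1+κ)t − 1) and u(t,x) = κ A₁ (e·x) e / (A₁(1+κ)t − 1). Then (a,u) satisfies the isentropic fluid equations: a_t + (u·∇)a + κ⁻¹ a div u = 0 and u_t + (u·∇)u + κ a ∇a = 0. -/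
/-! The ansatz separates variables: `a = α(t) (e·x)` and `u = κ α(t) (e·x) e` with
`α(t) = A₁ / (A₁(1+κ)t - 1)`. Both fields are linear in `x`, so every spatial derivative is
`α` times a product of components of `e`, and since `|e| = 1` both equations reduce to the
Riccati equation `α' = -(1+κ) α²`, which `α` solves. -/

open Function

section

variable {ι : Type*} [Fintype ι] {κ : ℝ} {e : ι → ℝ} {α : ℝ → ℝ}
  {a : ℝ → (ι → ℝ) → ℝ} {u : ℝ → (ι → ℝ) → ι → ℝ}

theorem deriv_rank1_density_time (ha : ∀ t x, a t x = α t * ∑ i, e i * x i) {α' t : ℝ}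
    (hα : HasDerivAt α α' t) (x : ι → ℝ) :
    deriv (fun s => a s x) t = α' * ∑ i, e i * x i := by
  simp only [ha]
  exact (hα.mul_const _).deriv

theorem deriv_rank1_velocity_time
    (hu : ∀ t x j, u t x j = κ * α t * (∑ i, e i * x i) * e j) {α' t : ℝ}
    (hα : HasDerivAt α α' t) (x : ι → ℝ) (j : ι) :
    deriv (fun s => u s x j) t = κ * α' * (∑ i, e i * x i) * e j := by
  simp only [hu]
  exact (((hα.const_mul κ).mul_const _).mul_const (e j)).deriv

variable [DecidableEq ι]

theorem hasDerivAt_sum_mul_update (e x : ι → ℝ) (k : ι) (s : ℝ) :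
    HasDerivAt (fun s => ∑ i, e i * update x k s i) (e k) s := by
  have hcoord (i : ι) : HasDerivAt (fun s => update x k s i) ((Pi.single k 1 : ι → ℝ) i) s :=
    hasDerivAt_pi.mp (hasDerivAt_update x k s) i
  simpa [Pi.single_apply] using
    HasDerivAt.fun_sum fun i (_ : i ∈ Finset.univ) => (hcoord i).const_mul (e i)

theorem deriv_rank1_density_coord (ha : ∀ t x, a t x = α t * ∑ i, e i * x i) (t : ℝ)
    (x : ι → ℝ) (k : ι) :
    deriv (fun s => a t (update x k s)) (x k) = α t * e k := by
  simp only [ha]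
  exact ((hasDerivAt_sum_mul_update e x k (x k)).const_mul (α t)).deriv

theorem deriv_rank1_velocity_coord
    (hu : ∀ t x j, u t x j = κ * α t * (∑ i, e i * x i) * e j) (t : ℝ) (x : ι → ℝ) (k j : ι) :
    deriv (fun s => u t (update x k s) j) (x k) = κ * α t * e k * e j := by
  simp only [hu]
  exact (((hasDerivAt_sum_mul_update e x k (x k)).const_mul (κ * α t)).mul_const (e j)).deriv

theorem rank1_continuity_eq (hκ : κ ≠ 0) (he : ∑ i, e i ^ 2 = 1) {t : ℝ}
    (hα : HasDerivAt α (-(1 + κ) * α t ^ 2) t)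
    (ha : ∀ t x, a t x = α t * ∑ i, e i * x i)
    (hu : ∀ t x j, u t x j = κ * α t * (∑ i, e i * x i) * e j) (x : ι → ℝ) :
    deriv (fun s => a s x) t
        + ∑ i, u t x i * deriv (fun s => a t (update x i s)) (x i)
        + κ⁻¹ * a t x * ∑ i, deriv (fun s => u t (update x i s) i) (x i) = 0 := by
  simp only [deriv_rank1_density_time ha hα, deriv_rank1_density_coord ha,
    deriv_rank1_velocity_coord hu]
  simp only [ha, hu]
  set S := ∑ i, e i * x i
  have hconv : ∑ i, κ * α t * S * e i * (α t * e i) = κ * α t ^ 2 * S * ∑ i, e i ^ 2 := by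
    rw [Finset.mul_sum _ (fun i => e i ^ 2)]
    exact Finset.sum_congr rfl fun i _ => by ring
  have hdiv : ∑ i, κ * α t * e i * e i = κ * α t * ∑ i, e i ^ 2 := by
    rw [Finset.mul_sum _ (fun i => e i ^ 2)]
    exact Finset.sum_congr rfl fun i _ => by ring
  rw [hconv, hdiv, he]
  field_simp
  ring

theorem rank1_momentum_eq (he : ∑ i, e i ^ 2 = 1) {t : ℝ}
    (hα : HasDerivAt α (-(1 + κ) * α t ^ 2) t)
    (ha : ∀ t x, a t x = α t * ∑ i, e i * x i)
    (hu : ∀ t x j, u t x j = κ * α t * (∑ i, e i * x i) * e j) (x : ι → ℝ) (j : ι) :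
    deriv (fun s => u s x j) t
        + ∑ i, u t x i * deriv (fun s => u t (update x i s) j) (x i)
        + κ * a t x * deriv (fun s => a t (update x j s)) (x j) = 0 := by
  simp only [deriv_rank1_velocity_time hu hα, deriv_rank1_velocity_coord hu,
    deriv_rank1_density_coord ha]
  simp only [ha, hu]
  set S := ∑ i, e i * x i
  have hconv : ∑ i, κ * α t * S * e i * (κ * α t * e i * e j)
      = κ * α t * S * (κ * α t * e j) * ∑ i, e i ^ 2 := by
    rw [Finset.mul_sum _ (fun i => e i ^ 2)]
    exact Finset.sum_congr rfl fun i _ => by ring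
  rw [hconv, he]
  ring

end

theorem hasDerivAt_const_div_mul_sub_one (c k t : ℝ) (h : c * k * t ≠ 1) :
    HasDerivAt (fun s => c / (c * k * s - 1)) (-k * (c / (c * k * t - 1)) ^ 2) t := by
  have hD : c * k * t - 1 ≠ 0 := sub_ne_zero.mpr h
  have hden : HasDerivAt (fun s => c * k * s - 1) (c * k) t := by
    simpa using ((hasDerivAt_id t).const_mul (c * k)).sub_const 1
  exact ((hasDerivAt_const t c).fun_div hden hD).congr_deriv (by field_simp; ring)

theorem rank1_potential_solution_isentropic (A₁ κ : ℝ) (hκ : 0 < κ)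
    (e : Fin 3 → ℝ) (he : ∑ i, e i ^ 2 = 1)
    (a : ℝ → (Fin 3 → ℝ) → ℝ)
    (ha : ∀ t x, a t x = A₁ * (∑ i, e i * x i) / (A₁ * (1 + κ) * t - 1))
    (u : ℝ → (Fin 3 → ℝ) → Fin 3 → ℝ)
    (hu : ∀ t x j, u t x j =
      κ * A₁ * (∑ i, e i * x i) * e j / (A₁ * (1 + κ) * t - 1))
    (t : ℝ) (x : Fin 3 → ℝ) (hd : A₁ * (1 + κ) * t ≠ 1) :
    (deriv (fun s => a s x) t
        + ∑ i, u t x i * deriv (fun s => a t (update x i s)) (x i)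
        + κ⁻¹ * a t x * ∑ i, deriv (fun s => u t (update x i s) i) (x i) = 0) ∧
    ∀ j, deriv (fun s => u s x j) t
        + ∑ i, u t x i * deriv (fun s => u t (update x i s) j) (x i)
        + κ * a t x * deriv (fun s => a t (update x j s)) (x j) = 0 := by
  have hα := hasDerivAt_const_div_mul_sub_one A₁ (1 + κ) t hd
  have ha' : ∀ t x, a t x = A₁ / (A₁ * (1 + κ) * t - 1) * ∑ i, e i * x i := fun t x => by
    rw [ha]; ring
  have hu' : ∀ t x j, u t x j =
      κ * (A₁ / (A₁ * (1 + κ) * t - 1)) * (∑ i, e i * x i) * e j := fun t x j => by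
    rw [hu]; ring
  exact ⟨rank1_continuity_eq hκ.ne' he hα ha' hu' x, rank1_momentum_eq he hα ha' hu' x⟩
end

section
/- Let e¹, e² be unit vectors in ℝ³ with e¹·e² = −κ⁻¹, where κ > 0, and let A₁, A₂ ∈ ℝ. On the domain where 1 + (1+κ)Aᵢt ≠ 0 (i = 1,2), define a(t,x) = Σᵢ Aᵢ(eⁱ·x)/(1+(1+κ)Aᵢt) and u(t,x) = Σᵢ κAᵢ(eⁱ·x)eⁱ/(1+(1+κ)Aᵢt). Then (a,u) satisfies a_t + (u·∇)a + κ⁻¹ a div u = 0 and u_t + (u·∇)u + κ a ∇a = 0. -/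
/-!
Both fields are linear in `x` with coefficients `αₖ(t) = Aₖ / (1 + (1 + κ) Aₖ t)`, which solve the
Riccati equation `αₖ' = -(1 + κ) αₖ²`. Hence `∇a = α₁ e₁ + α₂ e₂`, `∂ᵢ uⱼ = κ Σₖ αₖ eₖⁱ eₖʲ` and
`div u = κ (α₁ + α₂)`. Substituting, the terms in `αₖ²` cancel by the Riccati equation
(`-(1 + κ) + κ + 1 = 0`), and the interaction terms in `α₁ α₂` cancel exactly because
`e₁ ⬝ᵥ e₂ = -κ⁻¹`.
-/

open Function

section Calculus

variable {𝕜 : Type*} [NontriviallyNormedField 𝕜]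

theorem hasDerivAt_riccati {c A t : 𝕜} (h : 1 + c * A * t ≠ 0) :
    HasDerivAt (fun s => A / (1 + c * A * s)) (-c * (A / (1 + c * A * t)) ^ 2) t := by
  have hd : HasDerivAt (fun s : 𝕜 => 1 + c * A * s) (c * A) t := by
    simpa using ((hasDerivAt_id t).const_mul (c * A)).const_add 1
  exact ((hasDerivAt_const t A).fun_div hd h).congr_deriv (by rw [div_pow]; ring)

theorem hasDerivAt_dotProduct_update {ι : Type*} [Fintype ι] [DecidableEq ι]
    (e x : ι → 𝕜) (i : ι) (y : 𝕜) :
    HasDerivAt (fun s => e ⬝ᵥ update x i s) (e i) y := by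
  have h := HasDerivAt.fun_sum (u := Finset.univ) fun j _ =>
    ((hasDerivAt_pi.1 (hasDerivAt_update x i y)) j).const_mul (e j)
  simpa [dotProduct, Pi.single_apply] using h

end Calculus

section UnitVectors

variable {R ι : Type*} [CommSemiring R] [Fintype ι] {e₁ e₂ : ι → R} {c : R}

theorem sum_lincomb_mul_lincomb (he₁ : e₁ ⬝ᵥ e₁ = 1) (he₂ : e₂ ⬝ᵥ e₂ = 1) (hc : e₁ ⬝ᵥ e₂ = c)
    (p₁ p₂ q₁ q₂ : R) :
    ∑ i, (p₁ * e₁ i + p₂ * e₂ i) * (q₁ * e₁ i + q₂ * e₂ i)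
      = p₁ * q₁ + p₂ * q₂ + (p₁ * q₂ + p₂ * q₁) * c := by
  change (p₁ • e₁ + p₂ • e₂) ⬝ᵥ (q₁ • e₁ + q₂ • e₂) = _
  simp only [add_dotProduct, dotProduct_add, smul_dotProduct, dotProduct_smul, smul_eq_mul,
    he₁, he₂, hc, dotProduct_comm e₂ e₁]
  ring

theorem sum_lincomb_diag (he₁ : e₁ ⬝ᵥ e₁ = 1) (he₂ : e₂ ⬝ᵥ e₂ = 1) (p₁ p₂ : R) :
    ∑ i, (p₁ * e₁ i * e₁ i + p₂ * e₂ i * e₂ i) = p₁ + p₂ := by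
  rw [Finset.sum_add_distrib]
  change (p₁ • e₁) ⬝ᵥ e₁ + (p₂ • e₂) ⬝ᵥ e₂ = _
  simp only [smul_dotProduct, smul_eq_mul, he₁, he₂, mul_one]

end UnitVectors

section DoubleWave

variable {𝕜 ι : Type*} [NontriviallyNormedField 𝕜] [Fintype ι] {κ : 𝕜} {e₁ e₂ : ι → 𝕜}
  {α₁ α₂ : 𝕜 → 𝕜} {a : 𝕜 → (ι → 𝕜) → 𝕜} {u : 𝕜 → (ι → 𝕜) → ι → 𝕜} {t : 𝕜} {x : ι → 𝕜}

theorem deriv_soundSpeed_time (ha : ∀ t x, a t x = α₁ t * (e₁ ⬝ᵥ x) + α₂ t * (e₂ ⬝ᵥ x))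
    {α₁' α₂' : 𝕜} (hα₁ : HasDerivAt α₁ α₁' t) (hα₂ : HasDerivAt α₂ α₂' t) :
    deriv (fun s => a s x) t = α₁' * (e₁ ⬝ᵥ x) + α₂' * (e₂ ⬝ᵥ x) := by
  simp only [ha]
  exact ((hα₁.mul_const _).add (hα₂.mul_const _)).deriv

theorem deriv_velocity_time
    (hu : ∀ t x j, u t x j = κ * α₁ t * (e₁ ⬝ᵥ x) * e₁ j + κ * α₂ t * (e₂ ⬝ᵥ x) * e₂ j)
    {α₁' α₂' : 𝕜} (hα₁ : HasDerivAt α₁ α₁' t) (hα₂ : HasDerivAt α₂ α₂' t) (j : ι) :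
    deriv (fun s => u s x j) t
      = κ * α₁' * (e₁ ⬝ᵥ x) * e₁ j + κ * α₂' * (e₂ ⬝ᵥ x) * e₂ j := by
  simp only [hu]
  exact ((((hα₁.const_mul κ).mul_const _).mul_const _).add
    (((hα₂.const_mul κ).mul_const _).mul_const _)).deriv

variable [DecidableEq ι]

theorem deriv_soundSpeed_coord (ha : ∀ t x, a t x = α₁ t * (e₁ ⬝ᵥ x) + α₂ t * (e₂ ⬝ᵥ x)) (i : ι) :
    deriv (fun s => a t (update x i s)) (x i) = α₁ t * e₁ i + α₂ t * e₂ i := by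
  simp only [ha]
  exact (((hasDerivAt_dotProduct_update e₁ x i _).const_mul _).add
    ((hasDerivAt_dotProduct_update e₂ x i _).const_mul _)).deriv

theorem deriv_velocity_coord
    (hu : ∀ t x j, u t x j = κ * α₁ t * (e₁ ⬝ᵥ x) * e₁ j + κ * α₂ t * (e₂ ⬝ᵥ x) * e₂ j)
    (i j : ι) :
    deriv (fun s => u t (update x i s) j) (x i)
      = κ * α₁ t * e₁ j * e₁ i + κ * α₂ t * e₂ j * e₂ i := by
  simp only [hu]
  refine ((((hasDerivAt_dotProduct_update e₁ x i _).const_mul _).mul_const _).add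
    (((hasDerivAt_dotProduct_update e₂ x i _).const_mul _).mul_const _)).deriv.trans ?_
  ring

theorem doubleWave_mass_eq (hκ : κ ≠ 0)
    (he₁ : e₁ ⬝ᵥ e₁ = 1) (he₂ : e₂ ⬝ᵥ e₂ = 1) (hangle : e₁ ⬝ᵥ e₂ = -κ⁻¹)
    (hα₁ : HasDerivAt α₁ (-(1 + κ) * α₁ t ^ 2) t) (hα₂ : HasDerivAt α₂ (-(1 + κ) * α₂ t ^ 2) t)
    (ha : ∀ t x, a t x = α₁ t * (e₁ ⬝ᵥ x) + α₂ t * (e₂ ⬝ᵥ x))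
    (hu : ∀ t x j, u t x j = κ * α₁ t * (e₁ ⬝ᵥ x) * e₁ j + κ * α₂ t * (e₂ ⬝ᵥ x) * e₂ j) :
    deriv (fun s => a s x) t
      + ∑ i, u t x i * deriv (fun s => a t (update x i s)) (x i)
      + κ⁻¹ * a t x * ∑ i, deriv (fun s => u t (update x i s) i) (x i) = 0 := by
  rw [deriv_soundSpeed_time ha hα₁ hα₂]
  simp only [deriv_soundSpeed_coord ha, deriv_velocity_coord hu, hu t x, ha t x]
  rw [sum_lincomb_mul_lincomb he₁ he₂ hangle, sum_lincomb_diag he₁ he₂]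
  field_simp
  ring

theorem doubleWave_momentum_eq
    (he₁ : e₁ ⬝ᵥ e₁ = 1) (he₂ : e₂ ⬝ᵥ e₂ = 1) (hangle : e₁ ⬝ᵥ e₂ = -κ⁻¹)
    (hα₁ : HasDerivAt α₁ (-(1 + κ) * α₁ t ^ 2) t) (hα₂ : HasDerivAt α₂ (-(1 + κ) * α₂ t ^ 2) t)
    (ha : ∀ t x, a t x = α₁ t * (e₁ ⬝ᵥ x) + α₂ t * (e₂ ⬝ᵥ x))
    (hu : ∀ t x j, u t x j = κ * α₁ t * (e₁ ⬝ᵥ x) * e₁ j + κ * α₂ t * (e₂ ⬝ᵥ x) * e₂ j)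
    (j : ι) :
    deriv (fun s => u s x j) t
      + ∑ i, u t x i * deriv (fun s => u t (update x i s) j) (x i)
      + κ * a t x * deriv (fun s => a t (update x j s)) (x j) = 0 := by
  rw [deriv_velocity_time hu hα₁ hα₂, deriv_soundSpeed_coord ha]
  simp only [deriv_velocity_coord hu, hu t x, ha t x]
  rw [sum_lincomb_mul_lincomb he₁ he₂ hangle]
  field_simp
  ring

end DoubleWave

theorem rank2_double_wave_E1E2_isentropic (A₁ A₂ κ : ℝ) (hκ : 0 < κ)
    (e₁ e₂ : Fin 3 → ℝ) (he₁ : ∑ i, e₁ i ^ 2 = 1) (he₂ : ∑ i, e₂ i ^ 2 = 1)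
    (hangle : ∑ i, e₁ i * e₂ i = -κ⁻¹)
    (a : ℝ → (Fin 3 → ℝ) → ℝ)
    (ha : ∀ t x, a t x =
      A₁ * (∑ i, e₁ i * x i) / (1 + (1 + κ) * A₁ * t)
        + A₂ * (∑ i, e₂ i * x i) / (1 + (1 + κ) * A₂ * t))
    (u : ℝ → (Fin 3 → ℝ) → Fin 3 → ℝ)
    (hu : ∀ t x j, u t x j =
      κ * A₁ * (∑ i, e₁ i * x i) * e₁ j / (1 + (1 + κ) * A₁ * t)
        + κ * A₂ * (∑ i, e₂ i * x i) * e₂ j / (1 + (1 + κ) * A₂ * t))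
    (t : ℝ) (x : Fin 3 → ℝ)
    (hd₁ : 1 + (1 + κ) * A₁ * t ≠ 0) (hd₂ : 1 + (1 + κ) * A₂ * t ≠ 0) :
    (deriv (fun s => a s x) t
        + ∑ i, u t x i * deriv (fun s => a t (update x i s)) (x i)
        + κ⁻¹ * a t x * ∑ i, deriv (fun s => u t (update x i s) i) (x i) = 0) ∧
    ∀ j, deriv (fun s => u s x j) t
        + ∑ i, u t x i * deriv (fun s => u t (update x i s) j) (x i)
        + κ * a t x * deriv (fun s => a t (update x j s)) (x j) = 0 := by
  have hn₁ : e₁ ⬝ᵥ e₁ = 1 := by simpa only [dotProduct, sq] using he₁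
  have hn₂ : e₂ ⬝ᵥ e₂ = 1 := by simpa only [dotProduct, sq] using he₂
  have ha' : ∀ t x, a t x = A₁ / (1 + (1 + κ) * A₁ * t) * (e₁ ⬝ᵥ x)
      + A₂ / (1 + (1 + κ) * A₂ * t) * (e₂ ⬝ᵥ x) := fun t x => by
    rw [ha]; simp only [dotProduct]; ring
  have hu' : ∀ t x j, u t x j = κ * (A₁ / (1 + (1 + κ) * A₁ * t)) * (e₁ ⬝ᵥ x) * e₁ j
      + κ * (A₂ / (1 + (1 + κ) * A₂ * t)) * (e₂ ⬝ᵥ x) * e₂ j := fun t x j => by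
    rw [hu]; simp only [dotProduct]; ring
  have hα₁ := hasDerivAt_riccati hd₁
  have hα₂ := hasDerivAt_riccati hd₂
  exact ⟨doubleWave_mass_eq hκ.ne' hn₁ hn₂ hangle hα₁ hα₂ ha' hu',
    doubleWave_momentum_eq hn₁ hn₂ hangle hα₁ hα₂ ha' hu'⟩
end

section
/- Let g : ℝ → ℝ and b : ℝ² → ℝ be continuously differentiable, a₀ ∈ ℝ. Define on ℝ × ℝ³: u²(t,x) = u³(t,x) = g(x² − x³), u¹(t,x) = b(x² − t·g(x² − x³), x³ − t·g(x² − x³)), and a = a₀. Then u_t + (u·∇)u = 0, div u = 0, and hence (a,u) solves the isentropic fluid system a_t + (u·∇)a + κ⁻¹ a div u = 0, u_t + (u·∇)u + κ a ∇a = 0 for any κ ≠ 0. -/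
open Function

/-!
Since `u 1 = u 2`, the coordinate difference `x 1 - x 2` is constant along the space-time
direction `(1, u)`, hence so is `g (x 1 - x 2) = u 1 = u 2`. Particles therefore move with
constant velocity, so their initial positions `x k - t * u k` (`k = 1, 2`) are transported too,
and `u 0` is a function of them. Thus every component of `u` is transported, which is
`u_t + (u·∇)u = 0`. The divergence vanishes because `u 0` does not depend on `x 0` and
`∂₁ + ∂₂` kills any function of `x 1 - x 2`. For constant `a` the isentropic system reduces to
these two identities.
-/

section Transport

variable {n : ℕ}

noncomputable def materialDeriv (v : Fin n → ℝ) (f : ℝ → (Fin n → ℝ) → ℝ) (t : ℝ)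
    (x : Fin n → ℝ) : ℝ :=
  deriv (fun s => f s x) t + ∑ i, v i * deriv (fun s => f t (update x i s)) (x i)

theorem materialDeriv_eq_of_hasFDerivAt {f : ℝ → (Fin n → ℝ) → ℝ}
    {L : ℝ × (Fin n → ℝ) →L[ℝ] ℝ} {t : ℝ} {x : Fin n → ℝ}
    (hf : HasFDerivAt (uncurry f) L (t, x)) (v : Fin n → ℝ) :
    materialDeriv v f t x = L (1, v) := by
  have htime : deriv (fun s => f s x) t = L (1, 0) := by
    have h := hf.comp_hasDerivAt t ((hasDerivAt_id t).prodMk (hasDerivAt_const t x))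
    exact h.deriv
  have hspace (i : Fin n) : deriv (fun s => f t (update x i s)) (x i) = L (0, Pi.single i 1) := by
    rw [← update_eq_self i x] at hf
    have h := hf.comp_hasDerivAt (x i)
      ((hasDerivAt_const (x i) t).prodMk (hasDerivAt_update x i (x i)))
    exact h.deriv
  have hv : ((1, v) : ℝ × (Fin n → ℝ)) = (1, 0) + ∑ i, v i • (0, Pi.single i 1) := by
    ext1
    · simp [Prod.fst_sum]
    · simpa [Prod.snd_sum] using pi_eq_sum_univ' v
  simp only [materialDeriv, htime, hspace, hv, map_add, map_sum, map_smul, smul_eq_mul]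

def IsTransportedAt {F : Type*} [NormedAddCommGroup F] [NormedSpace ℝ F] (v : Fin n → ℝ)
    (f : ℝ × (Fin n → ℝ) → F) (p : ℝ × (Fin n → ℝ)) : Prop :=
  ∃ L : ℝ × (Fin n → ℝ) →L[ℝ] F, HasFDerivAt f L p ∧ L (1, v) = 0

namespace IsTransportedAt

variable {F G : Type*} [NormedAddCommGroup F] [NormedSpace ℝ F] [NormedAddCommGroup G]
  [NormedSpace ℝ G] {v : Fin n → ℝ} {p : ℝ × (Fin n → ℝ)}

theorem comp {f : ℝ × (Fin n → ℝ) → F} {Φ : F → G} (hΦ : DifferentiableAt ℝ Φ (f p))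
    (hf : IsTransportedAt v f p) : IsTransportedAt v (Φ ∘ f) p := by
  obtain ⟨L, hL, hLv⟩ := hf
  exact ⟨_, hΦ.hasFDerivAt.comp p hL, by simp [hLv]⟩

theorem prodMk {f : ℝ × (Fin n → ℝ) → F} {g : ℝ × (Fin n → ℝ) → G}
    (hf : IsTransportedAt v f p) (hg : IsTransportedAt v g p) :
    IsTransportedAt v (fun q => (f q, g q)) p := by
  obtain ⟨L, hL, hLv⟩ := hf
  obtain ⟨M, hM, hMv⟩ := hg
  exact ⟨_, hL.prodMk hM, by simp [hLv, hMv]⟩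

theorem coord_sub_time_mul {g : ℝ × (Fin n → ℝ) → ℝ} (hg : IsTransportedAt v g p) {k : Fin n}
    (hk : g p = v k) : IsTransportedAt v (fun q => q.2 k - q.1 * g q) p := by
  obtain ⟨L, hL, hLv⟩ := hg
  refine ⟨_, ((hasFDerivAt_apply k p.2).comp p hasFDerivAt_snd).sub (hasFDerivAt_fst.mul hL), ?_⟩
  simp [hLv, hk]

theorem materialDeriv_eq_zero {f : ℝ → (Fin n → ℝ) → ℝ} {t : ℝ} {x : Fin n → ℝ}
    (hf : IsTransportedAt v (uncurry f) (t, x)) : materialDeriv v f t x = 0 := by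
  obtain ⟨L, hL, hLv⟩ := hf
  rw [materialDeriv_eq_of_hasFDerivAt hL, hLv]

end IsTransportedAt

theorem isTransportedAt_coord_sub_coord {v : Fin n → ℝ} {i j : Fin n} (h : v i = v j)
    (p : ℝ × (Fin n → ℝ)) : IsTransportedAt v (fun q => q.2 i - q.2 j) p := by
  have hcoord (k : Fin n) : HasFDerivAt (fun q : ℝ × (Fin n → ℝ) => q.2 k)
      ((ContinuousLinearMap.proj k).comp (ContinuousLinearMap.snd ℝ ℝ (Fin n → ℝ))) p :=
    ((ContinuousLinearMap.proj k).comp (ContinuousLinearMap.snd ℝ ℝ (Fin n → ℝ))).hasFDerivAt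
  exact ⟨_, (hcoord i).sub (hcoord j), by simp [h]⟩

end Transport

namespace Rank2Solution

variable {g : ℝ → ℝ} {b : ℝ → ℝ → ℝ} {u : ℝ → (Fin 3 → ℝ) → Fin 3 → ℝ}

theorem divergence_eq_zero (hu0 : ∀ t x, u t x 0 =
      b (x 1 - t * g (x 1 - x 2)) (x 2 - t * g (x 1 - x 2)))
    (hu1 : ∀ t x, u t x 1 = g (x 1 - x 2)) (hu2 : ∀ t x, u t x 2 = g (x 1 - x 2))
    (t : ℝ) (x : Fin 3 → ℝ) : ∑ i, deriv (fun s => u t (update x i s) i) (x i) = 0 := by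
  have h0 : deriv (fun s => u t (update x 0 s) 0) (x 0) = 0 := by simp [hu0]
  have h1 : deriv (fun s => u t (update x 1 s) 1) (x 1) = deriv g (x 1 - x 2) := by
    simp [hu1, deriv_comp_sub_const]
  have h2 : deriv (fun s => u t (update x 2 s) 2) (x 2) = -deriv g (x 1 - x 2) := by
    simp [hu2, deriv_comp_const_sub]
  rw [Fin.sum_univ_three, h0, h1, h2]
  ring

theorem velocity_isTransportedAt (hg : Differentiable ℝ g)
    (hb : Differentiable ℝ (fun p : ℝ × ℝ => b p.1 p.2))
    (hu0 : ∀ t x, u t x 0 = b (x 1 - t * g (x 1 - x 2)) (x 2 - t * g (x 1 - x 2)))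
    (hu1 : ∀ t x, u t x 1 = g (x 1 - x 2)) (hu2 : ∀ t x, u t x 2 = g (x 1 - x 2))
    (t : ℝ) (x : Fin 3 → ℝ) (j : Fin 3) :
    IsTransportedAt (u t x) (uncurry fun s y => u s y j) (t, x) := by
  have hξ : IsTransportedAt (u t x) (fun q => q.2 1 - q.2 2) (t, x) :=
    isTransportedAt_coord_sub_coord (by rw [hu1, hu2]) _
  have hw : IsTransportedAt (u t x) (fun q => g (q.2 1 - q.2 2)) (t, x) := hξ.comp (hg _)
  fin_cases j
  · have hη := (hw.coord_sub_time_mul (hu1 t x).symm).prodMk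
      (hw.coord_sub_time_mul (hu2 t x).symm)
    convert hη.comp (hb _) using 1
    funext q
    exact hu0 q.1 q.2
  · convert hw using 1
    funext q
    exact hu1 q.1 q.2
  · convert hw using 1
    funext q
    exact hu2 q.1 q.2

end Rank2Solution

theorem rank2_solution_S1S2S3_isentropic_general
    (g : ℝ → ℝ) (hg : ContDiff ℝ 1 g)
    (b : ℝ → ℝ → ℝ) (hb : ContDiff ℝ 1 (fun p : ℝ × ℝ => b p.1 p.2))
    (a₀ κ : ℝ)
    (u : ℝ → (Fin 3 → ℝ) → Fin 3 → ℝ)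
    (hu0 : ∀ t x, u t x 0 =
      b (x 1 - t * g (x 1 - x 2)) (x 2 - t * g (x 1 - x 2)))
    (hu1 : ∀ t x, u t x 1 = g (x 1 - x 2))
    (hu2 : ∀ t x, u t x 2 = g (x 1 - x 2))
    (a : ℝ → (Fin 3 → ℝ) → ℝ) (ha : ∀ t x, a t x = a₀) :
    ∀ (t : ℝ) (x : Fin 3 → ℝ),
      (∀ j, deriv (fun s => u s x j) t
          + ∑ i, u t x i * deriv (fun s => u t (update x i s) j) (x i) = 0) ∧
      (∑ i, deriv (fun s => u t (update x i s) i) (x i) = 0) ∧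
      (deriv (fun s => a s x) t
          + ∑ i, u t x i * deriv (fun s => a t (update x i s)) (x i)
          + κ⁻¹ * a t x * ∑ i, deriv (fun s => u t (update x i s) i) (x i) = 0) ∧
      (∀ j, deriv (fun s => u s x j) t
          + ∑ i, u t x i * deriv (fun s => u t (update x i s) j) (x i)
          + κ * a t x * deriv (fun s => a t (update x j s)) (x j) = 0) := by
  intro t x
  have hdiv := Rank2Solution.divergence_eq_zero hu0 hu1 hu2 t x
  have hmom (j : Fin 3) : materialDeriv (u t x) (fun s y => u s y j) t x = 0 :=
    (Rank2Solution.velocity_isTransportedAt (hg.differentiable one_ne_zero)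
      (hb.differentiable one_ne_zero) hu0 hu1 hu2 t x j).materialDeriv_eq_zero
  have ha_t : deriv (fun s => a s x) t = 0 := by simp [ha]
  have ha_x (i : Fin 3) : deriv (fun s => a t (update x i s)) (x i) = 0 := by simp [ha]
  refine ⟨hmom, hdiv, ?_, fun j => ?_⟩
  · simp [ha_t, ha_x, hdiv]
  · rw [ha_x, mul_zero, add_zero]
    exact hmom j

theorem rank2_solution_S1S2S3_isentropic
    (g : ℝ → ℝ) (hg : ContDiff ℝ 1 g)
    (b : ℝ → ℝ → ℝ) (hb : ContDiff ℝ 1 (fun p : ℝ × ℝ => b p.1 p.2))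
    (a₀ κ : ℝ) (hκ : κ ≠ 0)
    (u : ℝ → (Fin 3 → ℝ) → Fin 3 → ℝ)
    (hu0 : ∀ t x, u t x 0 =
      b (x 1 - t * g (x 1 - x 2)) (x 2 - t * g (x 1 - x 2)))
    (hu1 : ∀ t x, u t x 1 = g (x 1 - x 2))
    (hu2 : ∀ t x, u t x 2 = g (x 1 - x 2))
    (a : ℝ → (Fin 3 → ℝ) → ℝ) (ha : ∀ t x, a t x = a₀) :
    ∀ (t : ℝ) (x : Fin 3 → ℝ),
      (∀ j, deriv (fun s => u s x j) t
          + ∑ i, u t x i * deriv (fun s => u t (update x i s) j) (x i) = 0) ∧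
      (∑ i, deriv (fun s => u t (update x i s) i) (x i) = 0) ∧
      (deriv (fun s => a s x) t
          + ∑ i, u t x i * deriv (fun s => a t (update x i s)) (x i)
          + κ⁻¹ * a t x * ∑ i, deriv (fun s => u t (update x i s) i) (x i) = 0) ∧
      (∀ j, deriv (fun s => u s x j) t
          + ∑ i, u t x i * deriv (fun s => u t (update x i s) j) (x i)
          + κ * a t x * deriv (fun s => a t (update x j s)) (x j) = 0) :=
  rank2_solution_S1S2S3_isentropic_general g hg b hb a₀ κ u hu0 hu1 hu2 a ha
end
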